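/- arXiv:1602.07858 — 6 statements merged into one kernel-verified Lean document; each statement's English description precedes it below -/
import Mathlib

section
/- Let R be a commutative ring, n ≥ 1, and C ∈ R. Let M be the n × n matrix with M(i,i) = -1 for all i, M(i+1,i) = C for 1 ≤ i ≤ n-1, M(i,n) = -C for 1 ≤ i ≤ n-1, and M(n,n) = -1 - C (all other entries 0). Then det M = (-1)^n · ∑_{i=0}^{n} C^i. -/
/-!
Expand the determinant along the first row, whose only nonzero entries are `-1` in the first
column and `-C` in the last. The first minor is the same matrix one size smaller, and the last
minor is upper triangular with `C` on the diagonal. Hence `d n = det M_{C,n}` satisfies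
`d (n + 2) = -d (n + 1) + (-1)^n C^(n + 2)`, a recursion the claimed formula also satisfies.
-/

open Finset

namespace Matrix

variable {R : Type*} [CommRing R]

/-- The matrix `M_{C,n}`, with rows and columns indexed from `0` to `n - 1`. -/
def subdiagLastCol (C : R) (n : ℕ) : Matrix (Fin n) (Fin n) R :=
  of fun i j => (if i = j then -1 else 0) + (if (i : ℕ) = (j : ℕ) + 1 then C else 0)
    + (if (j : ℕ) = n - 1 then -C else 0)

theorem subdiagLastCol_submatrix_succ_succ (C : R) (n : ℕ) :
    (subdiagLastCol C (n + 2)).submatrix Fin.succ Fin.succ = subdiagLastCol C (n + 1) := by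
  ext i j
  simp [subdiagLastCol, Fin.succ_inj]

theorem det_subdiagLastCol_submatrix_succ_castSucc (C : R) (n : ℕ) :
    ((subdiagLastCol C (n + 1)).submatrix Fin.succ Fin.castSucc).det = C ^ n := by
  have hupper : ((subdiagLastCol C (n + 1)).submatrix Fin.succ Fin.castSucc).IsUpperTriangular := by
    intro i j hji
    have : (j : ℕ) < i := hji
    simp [subdiagLastCol, Fin.ext_iff, show (i : ℕ) + 1 ≠ j by omega, show (i : ℕ) ≠ j by omega,
      j.is_lt.ne]
  rw [det_of_isUpperTriangular hupper]
  calc ∏ i, _ = ∏ _i : Fin n, C := prod_congr rfl fun i _ => by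
        simp [subdiagLastCol, Fin.ext_iff, i.is_lt.ne]
    _ = C ^ n := by simp

theorem det_subdiagLastCol_one (C : R) : (subdiagLastCol C 1).det = -1 - C := by
  simp [subdiagLastCol]
  ring

theorem det_subdiagLastCol_add_two (C : R) (n : ℕ) :
    (subdiagLastCol C (n + 2)).det = -(subdiagLastCol C (n + 1)).det + (-1) ^ n * C ^ (n + 2) := by
  rw [det_succ_row_zero, sum_eq_add_of_mem 0 (Fin.last (n + 1)) (mem_univ _) (mem_univ _)
    (by simp [Fin.ext_iff])]
  · rw [Fin.succAbove_zero, subdiagLastCol_submatrix_succ_succ, Fin.succAbove_last,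
      det_subdiagLastCol_submatrix_succ_castSucc]
    simp [subdiagLastCol, Fin.ext_iff]
    ring
  · rintro j - ⟨hj0, hjl⟩
    simp only [ne_eq, Fin.ext_iff, Fin.val_zero, Fin.val_last] at hj0 hjl
    have hentry : subdiagLastCol C (n + 2) 0 j = 0 := by
      simp only [subdiagLastCol, of_apply]
      rw [if_neg (by simp [Fin.ext_iff]; omega), if_neg (by simp), if_neg (by omega)]
      simp
    rw [hentry, mul_zero, zero_mul]

theorem det_subdiagLastCol (C : R) (n : ℕ) :
    (subdiagLastCol C (n + 1)).det = (-1) ^ (n + 1) * ∑ i ∈ range (n + 2), C ^ i := by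
  induction n with
  | zero =>
    rw [det_subdiagLastCol_one]
    simp [sum_range_succ]
    ring
  | succ n ih =>
    rw [det_subdiagLastCol_add_two, ih, sum_range_succ _ (n + 2)]
    ring

end Matrix

/-- Determinant of the matrix `M_{C,n}` with `-1` on the diagonal, `C` on the subdiagonal,
`-C` in the last column (and `-1 - C` at the bottom-right corner):
`det = (-1)^n ∑_{i=0}^n C^i`. -/
theorem stmt_2 {R : Type*} [CommRing R] (n : ℕ) (hn : 1 ≤ n) (C : R)
    (M : Matrix (Fin n) (Fin n) R)
    (hM : ∀ i j : Fin n,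
      M i j = (if i = j then -1 else 0) + (if (i : ℕ) = (j : ℕ) + 1 then C else 0)
        + (if (j : ℕ) = n - 1 then -C else 0)) :
    M.det = (-1) ^ n * ∑ i ∈ Finset.range (n + 1), C ^ i := by
  obtain ⟨m, rfl⟩ : ∃ m, n = m + 1 := ⟨n - 1, by omega⟩
  have hM_eq : M = Matrix.subdiagLastCol C (m + 1) := Matrix.ext hM
  rw [hM_eq, Matrix.det_subdiagLastCol]
end

section
/- Let R be a commutative ring, m ≥ 2, and C ∈ R. Let ℳ be the m × m matrix with ℳ(1,1) = C - 1, ℳ(1,m) = C, ℳ(i,i) = -1 for 2 ≤ i ≤ m-1, ℳ(i+1,i) = C for 2 ≤ i ≤ m-1, ℳ(i,m) = -C for 2 ≤ i ≤ m-1, ℳ(m,m) = -1 - C, and all other entries 0. Then det ℳ = (-1)^{m-1}(C^m - 1). -/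
/-!
The first column of `ℳ` is `(C - 1, 0, …, 0)`, so `det ℳ = (C - 1) · det A` with `A` the
lower-right block of `ℳ`. Expanding `A` along its first row leaves two minors: a smaller copy of
`A`, and an upper triangular matrix with `C` on the diagonal. This gives
`det A = (-1)^(m-1) (1 + C + ⋯ + C^(m-1))`, and `(C - 1)` times the geometric sum is `C^m - 1`.
-/

open Finset Matrix

section TailMatrix

variable {R : Type*} [CommRing R]

/-- The lower-right `(n + 1) × (n + 1)` block of `ℳ` for `m = n + 2`. -/
def tailMatrix (n : ℕ) (C : R) : Matrix (Fin (n + 1)) (Fin (n + 1)) R :=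
  of fun i j =>
    if (j : ℕ) = n then (if (i : ℕ) = n then -1 - C else -C)
    else if (i : ℕ) = j then -1
    else if (i : ℕ) = j + 1 then C
    else 0

theorem tailMatrix_zero_apply (n : ℕ) (C : R) (j : Fin (n + 2)) :
    tailMatrix (n + 1) C 0 j = if (j : ℕ) = 0 then -1 else if (j : ℕ) = n + 1 then -C else 0 := by
  simp only [tailMatrix, of_apply, Fin.val_zero]
  grind

theorem tailMatrix_submatrix_succ_succ (n : ℕ) (C : R) :
    (tailMatrix (n + 1) C).submatrix Fin.succ Fin.succ = tailMatrix n C := by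
  ext i j
  simp only [tailMatrix, submatrix_apply, of_apply, Fin.val_succ]
  grind

theorem det_tailMatrix_submatrix_succ_castSucc (n : ℕ) (C : R) :
    ((tailMatrix (n + 1) C).submatrix Fin.succ Fin.castSucc).det = C ^ (n + 1) := by
  have hdiag (i : Fin (n + 1)) : tailMatrix (n + 1) C i.succ i.castSucc = C := by
    simp only [tailMatrix, of_apply, Fin.val_succ, Fin.val_castSucc]
    grind
  rw [det_of_isUpperTriangular]
  · simp [hdiag]
  · intro i j (hij : (j : ℕ) < i)
    simp only [tailMatrix, submatrix_apply, of_apply, Fin.val_succ, Fin.val_castSucc]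
    grind

theorem det_tailMatrix_succ (n : ℕ) (C : R) :
    (tailMatrix (n + 1) C).det = -(tailMatrix n C).det + (-1) ^ n * C ^ (n + 2) := by
  rw [det_succ_row_zero, Fin.sum_univ_succ, Fin.sum_univ_castSucc]
  simp only [tailMatrix_zero_apply, Fin.succAbove_zero, tailMatrix_submatrix_succ_succ,
    Fin.val_succ, Fin.val_castSucc, Fin.val_last, Fin.succ_last, Fin.succAbove_last,
    det_tailMatrix_submatrix_succ_castSucc]
  rw [sum_eq_zero fun x _ => by rw [if_neg (Nat.succ_ne_zero _), if_neg (by omega)]; ring]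
  simp only [Fin.val_zero, if_true, Nat.succ_ne_zero, if_false, Nat.succ_eq_add_one]
  ring

theorem det_tailMatrix (n : ℕ) (C : R) :
    (tailMatrix n C).det = (-1) ^ (n + 1) * ∑ k ∈ range (n + 2), C ^ k := by
  induction n with
  | zero => simp [det_unique, tailMatrix, sum_range_succ]; ring
  | succ n ih =>
    rw [det_tailMatrix_succ, ih, sum_range_succ _ (n + 2)]
    ring

end TailMatrix

/-- Determinant of the matrix `ℳ` (case ω = 0): `ℳ(1,1) = C - 1`, `ℳ(1,m) = C`,
diagonal `-1` for rows `2 ≤ i ≤ m-1`, subdiagonal `C` in columns `2 ≤ j ≤ m-1`,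
last column `-C` for rows `2 ≤ i ≤ m-1`, `ℳ(m,m) = -1 - C`:
`det ℳ = (-1)^{m-1}(C^m - 1)`. -/
theorem stmt_3 {R : Type*} [CommRing R] (m : ℕ) (hm : 2 ≤ m) (C : R)
    (M : Matrix (Fin m) (Fin m) R)
    (hM : ∀ i j : Fin m, M i j =
      if (i : ℕ) = 0 ∧ (j : ℕ) = 0 then C - 1
      else if (j : ℕ) = m - 1 then
        (if (i : ℕ) = 0 then C else if (i : ℕ) = m - 1 then -1 - C else -C)
      else if i = j then -1
      else if (i : ℕ) = (j : ℕ) + 1 ∧ 1 ≤ (j : ℕ) then C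
      else 0) :
    M.det = (-1) ^ (m - 1) * (C ^ m - 1) := by
  obtain ⟨n, rfl⟩ : ∃ n, m = n + 2 := ⟨m - 2, by omega⟩
  have hcorner : M 0 0 = C - 1 := by simp [hM]
  have hcol (i : Fin (n + 1)) : M i.succ 0 = 0 := by
    simp only [hM, Fin.val_succ, Fin.val_zero, Fin.ext_iff]
    grind
  have hminor : M.submatrix Fin.succ Fin.succ = tailMatrix n C := by
    ext i j
    simp only [submatrix_apply, hM, tailMatrix, of_apply, Fin.val_succ, Fin.ext_iff]
    grind
  rw [det_succ_column_zero, Fin.sum_univ_succ, sum_eq_zero fun i _ => by simp [hcol],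
    add_zero, Fin.succAbove_zero, hminor, det_tailMatrix, hcorner, ← mul_geom_sum,
    show n + 2 - 1 = n + 1 from rfl]
  simp only [Fin.val_zero, pow_zero, one_mul]
  ring
end

section
/- Let R be a commutative ring, m ≥ 2, and C ∈ R. Let ℳ be the m × m matrix with ℳ(1,m) = C; ℳ(2,1) = -1 and ℳ(2,2) = -1; ℳ(i,i) = -1 and ℳ(i+1,i) = C for 3 ≤ i ≤ m-1 (and ℳ(3,2) = C); ℳ(i,m) = -C for 2 ≤ i ≤ m-1; ℳ(m,m) = -1 - C; all other entries 0. Then det ℳ = (-1)^m · C^{m-1}. -/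
/-! Expanding along the first row, whose only nonzero entry is `C` in the last column, leaves the
minor obtained by deleting the first row and the last column. That minor is upper triangular
with diagonal `-1, C, …, C`, so `det ℳ = (-1)^(m-1) · C · (-C^(m-2))`. -/

open Matrix

namespace Matrix

variable {R : Type*} [CommRing R]

theorem det_succ_eq_of_row_zero_eq_single {n : ℕ} (A : Matrix (Fin (n + 1)) (Fin (n + 1)) R)
    (j : Fin (n + 1)) (hA : ∀ k, k ≠ j → A 0 k = 0) :
    A.det = (-1) ^ (j : ℕ) * A 0 j * (A.submatrix Fin.succ j.succAbove).det := by
  rw [det_succ_row_zero, Finset.sum_eq_single j (fun k _ hk => by simp [hA k hk]) (by simp)]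

end Matrix

section OmegaMatrix

variable {R : Type*} [CommRing R]

-- `ℳ` with `0`-based indices: row and column `0` are the paper's row and column `1`.
def omegaMatrix (m : ℕ) (C : R) : Matrix (Fin m) (Fin m) R :=
  Matrix.of fun i j =>
    if (j : ℕ) = m - 1 then
      (if (i : ℕ) = 0 then C else if (i : ℕ) = m - 1 then -1 - C else -C)
    else if (i : ℕ) = 1 ∧ (j : ℕ) = 0 then -1
    else if i = j ∧ 1 ≤ (i : ℕ) then -1
    else if (i : ℕ) = (j : ℕ) + 1 ∧ 1 ≤ (j : ℕ) then C
    else 0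

theorem omegaMatrix_zero_apply_of_ne_last {k : ℕ} (C : R) (j : Fin (k + 2))
    (hj : j ≠ Fin.last (k + 1)) : omegaMatrix (k + 2) C 0 j = 0 := by
  have hj' : (j : ℕ) ≠ k + 1 := fun h => hj (Fin.ext h)
  simp [omegaMatrix, hj']

theorem omegaMatrix_zero_last {k : ℕ} (C : R) :
    omegaMatrix (k + 2) C 0 (Fin.last (k + 1)) = C := by
  simp [omegaMatrix]

theorem isUpperTriangular_omegaMatrix_minor (k : ℕ) (C : R) :
    ((omegaMatrix (k + 2) C).submatrix Fin.succ Fin.castSucc).IsUpperTriangular := by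
  intro i j (hji : (j : ℕ) < i)
  have hne : i.succ ≠ j.castSucc := fun h => by simp [Fin.ext_iff] at h; omega
  simp only [submatrix_apply, omegaMatrix, of_apply, Fin.val_succ, Fin.val_castSucc, hne,
    false_and, if_false]
  split_ifs <;> first | rfl | omega

theorem omegaMatrix_minor_apply_self (k : ℕ) (C : R) (i : Fin (k + 1)) :
    (omegaMatrix (k + 2) C).submatrix Fin.succ Fin.castSucc i i =
      if (i : ℕ) = 0 then -1 else C := by
  have hne : i.succ ≠ i.castSucc := fun h => by simp [Fin.ext_iff] at h
  simp only [submatrix_apply, omegaMatrix, of_apply, Fin.val_succ, Fin.val_castSucc, hne,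
    false_and, true_and, if_false]
  split_ifs <;> first | rfl | omega

theorem det_omegaMatrix_minor (k : ℕ) (C : R) :
    ((omegaMatrix (k + 2) C).submatrix Fin.succ Fin.castSucc).det = -C ^ k := by
  rw [det_of_isUpperTriangular (isUpperTriangular_omegaMatrix_minor k C), Fin.prod_univ_succ]
  simp only [omegaMatrix_minor_apply_self, Fin.val_zero, Fin.val_succ, if_pos, Nat.succ_ne_zero,
    if_false, Finset.prod_const, Finset.card_univ, Fintype.card_fin]
  ring

theorem det_omegaMatrix {m : ℕ} (hm : 2 ≤ m) (C : R) :
    (omegaMatrix m C).det = (-1) ^ m * C ^ (m - 1) := by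
  obtain ⟨k, rfl⟩ : ∃ k, m = k + 2 := ⟨m - 2, by omega⟩
  rw [det_succ_eq_of_row_zero_eq_single _ (Fin.last (k + 1))
      (omegaMatrix_zero_apply_of_ne_last C),
    Fin.succAbove_last, omegaMatrix_zero_last, det_omegaMatrix_minor, Fin.val_last,
    show k + 2 - 1 = k + 1 from rfl]
  ring

end OmegaMatrix

/-- Determinant of the matrix `ℳ` (case ω > 0): `ℳ(1,m) = C`; `ℳ(2,1) = ℳ(2,2) = -1`;
diagonal `-1` and subdiagonal `C` in the middle; last column `-C` for rows `2 ≤ i ≤ m-1`;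
`ℳ(m,m) = -1 - C`: `det ℳ = (-1)^m C^{m-1}`. -/
theorem stmt_4 {R : Type*} [CommRing R] (m : ℕ) (hm : 2 ≤ m) (C : R)
    (M : Matrix (Fin m) (Fin m) R)
    (hM : ∀ i j : Fin m, M i j =
      if (j : ℕ) = m - 1 then
        (if (i : ℕ) = 0 then C else if (i : ℕ) = m - 1 then -1 - C else -C)
      else if (i : ℕ) = 1 ∧ (j : ℕ) = 0 then -1
      else if i = j ∧ 1 ≤ (i : ℕ) then -1
      else if (i : ℕ) = (j : ℕ) + 1 ∧ 1 ≤ (j : ℕ) then C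
      else 0) :
    M.det = (-1) ^ m * C ^ (m - 1) := by
  rw [show M = omegaMatrix m C from Matrix.ext hM]
  exact det_omegaMatrix hm C
end

section
/- Let p be a prime, d ≥ 1, and c ∈ ℤ_p^× with c^d ≠ 1; set ω = v_p(c^d - 1). Let G = ℤ/dℤ with generator b, and let π : ℤ_p[G] → ℤ/p^ωℤ be the ℤ_p-algebra homomorphism determined by π(b) = (c̄)^{-1}, where c̄ is the image of c in (ℤ/p^ωℤ)^× (this is well-defined since c^d ≡ 1 mod p^ω). Then the kernel of π is the ideal of ℤ_p[G] generated by c·b - 1. -/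
/-!
Modulo `c·b - 1` the generator `b` becomes the scalar `c⁻¹`, so every element of `ℤ_p[G]` is
congruent to a constant `r`, on which `π` is reduction mod `p^ω`. A constant killed by `π` is thus
divisible by `p^ω`, hence by `c^d - 1`, which has valuation `ω`; and since `b^d = 1`,
`c^d - 1 = (c·b)^d - 1` is a multiple of `c·b - 1`.
-/

namespace MonoidAlgebra

variable {R G : Type*} [CommRing R] [CommMonoid G]

theorem surjective_algebraMap_quotient_span_single_sub_one {b : G}
    (hb : ∀ g : G, g ∈ Submonoid.powers b) (u : Rˣ) :
    Function.Surjective (algebraMap R (R[G] ⧸ Ideal.span {single b (u : R) - 1})) := by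
  set mk := Ideal.Quotient.mk (Ideal.span {single b (u : R) - 1})
  have hof : mk (of R G b) = algebraMap R _ (u⁻¹ : Rˣ) := by
    have hunit : mk (single b (u : R)) = 1 := by
      rw [← sub_eq_zero, ← map_one mk, ← map_sub, Ideal.Quotient.eq_zero_iff_mem]
      exact Ideal.subset_span rfl
    have hsplit : of R G b = single b (u : R) * algebraMap R R[G] (u⁻¹ : Rˣ) := by
      rw [coe_algebraMap, Function.comp_apply, single_mul_single, mul_one,
        Algebra.algebraMap_self, RingHom.id_apply, Units.mul_inv]
      rfl
    rw [hsplit, map_mul, hunit, one_mul]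
    rfl
  intro y
  obtain ⟨x, rfl⟩ := Ideal.Quotient.mk_surjective y
  induction x using MonoidAlgebra.induction_on with
  | of g =>
    obtain ⟨n, rfl⟩ := hb g
    exact ⟨((u⁻¹ : Rˣ) : R) ^ n, by rw [map_pow, map_pow, ← hof]; rfl⟩
  | add x y hx hy =>
    obtain ⟨r, hr⟩ := hx
    obtain ⟨s, hs⟩ := hy
    exact ⟨r + s, by rw [map_add, map_add, hr, hs]⟩
  | smul r x hx =>
    obtain ⟨s, hs⟩ := hx
    exact ⟨r * s, by rw [map_mul, hs, Algebra.smul_def, map_mul]; rfl⟩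

theorem algebraMap_pow_sub_one_mem_span_single_sub_one {b : G} {d : ℕ} (hbd : b ^ d = 1)
    (a : R) : algebraMap R R[G] (a ^ d - 1) ∈ Ideal.span {single b a - 1} := by
  have hpow : algebraMap R R[G] (a ^ d - 1) = single b a ^ d - 1 := by
    rw [single_pow, hbd, map_sub, map_one]
    rfl
  rw [hpow, Ideal.mem_span_singleton]
  exact sub_one_dvd_pow_sub_one _ d

end MonoidAlgebra

theorem PadicInt.span_singleton_eq_span_p_pow_valuation {p : ℕ} [Fact p.Prime] {x : ℤ_[p]}
    (hx : x ≠ 0) : Ideal.span {x} = Ideal.span {(p : ℤ_[p]) ^ x.valuation} := by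
  conv_lhs => rw [PadicInt.unitCoeff_spec hx]
  exact Ideal.span_singleton_mul_left_unit (PadicInt.unitCoeff hx).isUnit _

theorem RingHom.ker_eq_of_surjective_algebraMap_quotient {R A S : Type*} [CommRing R]
    [CommRing A] [Algebra R A] [Ring S] {I : Ideal A}
    (hI : Function.Surjective (algebraMap R (A ⧸ I))) (f : A →+* S) (hle : I ≤ RingHom.ker f)
    (hR : ∀ r : R, f (algebraMap R A r) = 0 → algebraMap R A r ∈ I) : RingHom.ker f = I := by
  refine le_antisymm (fun x hx => ?_) hle
  obtain ⟨r, hr⟩ := hI (Ideal.Quotient.mk I x)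
  have hxr : x - algebraMap R A r ∈ I := by
    rw [← Ideal.Quotient.eq, ← hr]
    rfl
  have hfr : f (algebraMap R A r) = 0 := by
    simpa [RingHom.mem_ker.mp hx] using hle hxr
  simpa using I.add_mem hxr (hR r hfr)

/-- The kernel of the ℤ_p-algebra map `π : ℤ_p[ℤ/dℤ] → ℤ/p^ωℤ` with `π(b) = c̄⁻¹`
(where `ω = v_p(c^d - 1)`) is the ideal generated by `c·b - 1`. -/
theorem stmt_11 (p : ℕ) [Fact p.Prime] (d : ℕ) (hd : 1 ≤ d)
    (c : ℤ_[p]ˣ) (hc : (c : ℤ_[p]) ^ d ≠ 1) (ω : ℕ)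
    (hω : ((c : ℤ_[p]) ^ d - 1).valuation = (ω : ℤ))
    (cbar : ZMod (p ^ ω)) (hcbar : cbar = PadicInt.toZModPow ω (c : ℤ_[p]))
    (hcu : IsUnit cbar)
    (π : MonoidAlgebra ℤ_[p] (Multiplicative (ZMod d)) →+* ZMod (p ^ ω))
    (hπ0 : ∀ r : ℤ_[p], π (MonoidAlgebra.single 1 r) = PadicInt.toZModPow ω r)
    (hπb : π (MonoidAlgebra.single (Multiplicative.ofAdd (1 : ZMod d)) 1)
      = ((hcu.unit⁻¹ : (ZMod (p ^ ω))ˣ) : ZMod (p ^ ω))) :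
    RingHom.ker π = Ideal.span
      {MonoidAlgebra.single (Multiplicative.ofAdd (1 : ZMod d)) (c : ℤ_[p]) - 1} := by
  have : NeZero d := ⟨Nat.one_le_iff_ne_zero.mp hd⟩
  have hb (g : Multiplicative (ZMod d)) : g ∈ Submonoid.powers (.ofAdd 1) :=
    ⟨(Multiplicative.toAdd g).val, by
      show Multiplicative.ofAdd 1 ^ _ = g
      rw [← ofAdd_nsmul, nsmul_one, ZMod.natCast_zmod_val, ofAdd_toAdd]⟩
  have hbd : Multiplicative.ofAdd (1 : ZMod d) ^ d = 1 := by
    rw [← ofAdd_nsmul, nsmul_one, ZMod.natCast_self, ofAdd_zero]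
  have hπc : π (MonoidAlgebra.single (.ofAdd 1) (c : ℤ_[p]) - 1) = 0 := by
    have hsplit : MonoidAlgebra.single (Multiplicative.ofAdd (1 : ZMod d)) (c : ℤ_[p]) =
        MonoidAlgebra.single 1 (c : ℤ_[p]) * MonoidAlgebra.single (.ofAdd 1) 1 := by
      rw [MonoidAlgebra.single_mul_single, one_mul, mul_one]
    rw [map_sub, hsplit, map_mul, hπ0, hπb, ← hcbar, hcu.mul_val_inv, map_one, sub_self]
  refine RingHom.ker_eq_of_surjective_algebraMap_quotient
    (MonoidAlgebra.surjective_algebraMap_quotient_span_single_sub_one hb c) π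
    (Ideal.span_le.mpr (Set.singleton_subset_iff.mpr hπc)) fun r hπr => ?_
  have hr : r ∈ Ideal.span {(c : ℤ_[p]) ^ d - 1} := by
    rw [PadicInt.span_singleton_eq_span_p_pow_valuation (sub_ne_zero.mpr hc),
      Nat.cast_inj.mp hω, ← PadicInt.ker_toZModPow, RingHom.mem_ker, ← hπ0]
    exact hπr
  obtain ⟨s, rfl⟩ := Ideal.mem_span_singleton'.mp hr
  rw [map_mul, mul_comm]
  exact Ideal.mul_mem_right _ _
    (MonoidAlgebra.algebraMap_pow_sub_one_mem_span_single_sub_one hbd _)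
end

section
/- Let p be a prime, d ≥ 1, and let G = (ℤ/pℤ) × (ℤ/dℤ) with generators a (of order p) and b (of order d). Let c ∈ ℤ_p^× with c^d ≠ 1, and define the ℤ_p[G]-module map δ : ℤ_p[G]² → ℤ_p[G] by δ(z_1, z_2) = (c·b - 1)·z_1 + (a - 1)·z_2. Then ker δ is generated as a ℤ_p[G]-module by the two elements (0, 𝒯_a) and (a - 1, -(c·b - 1)), where 𝒯_a = ∑_{i=0}^{p-1} a^i. -/
/-!
Write `α = a - 1`, `𝒯 = ∑ aⁱ` and `β = c·b - 1` in `ℤ_p[ℤ/p × ℤ/d]`. Viewing elements as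
functions of `(x, v)`, multiplication by `α` is a difference operator in `x` and
multiplication by `𝒯` sums over `x`; hence `ker α = im 𝒯` and `ker 𝒯 = im α`. Moreover `β`
is a non-zero-divisor, as it divides `(c·b)^d - 1 = c^d - 1`. If `β z₁ + α z₂ = 0`, multiplying
by `𝒯` kills `α`, so `𝒯 z₁ = 0` and `z₁ = α w`; then `α (β w + z₂) = 0`, so `β w + z₂ = 𝒯 s`
and `z = s • (0, 𝒯) + w • (α, -β)`.
-/

open MonoidAlgebra Multiplicative Finset

namespace ZMod

variable {n : ℕ} [NeZero n] {M : Type*}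

theorem sum_range_natCast [AddCommMonoid M] (f : ZMod n → M) :
    ∑ i ∈ range n, f i = ∑ x, f x :=
  sum_bij' (fun i _ => (i : ZMod n)) (fun x _ => x.val) (by simp)
    (fun x _ => mem_range.2 x.val_lt) (fun _ hi => val_cast_of_lt (mem_range.1 hi))
    (fun x _ => natCast_zmod_val x) (fun _ _ => rfl)

theorem apply_eq_apply_zero_of_periodic {f : ZMod n → M} (h : Function.Periodic f 1)
    (x : ZMod n) : f x = f 0 := by
  simpa using h.nat_mul_eq x.val

theorem exists_sub_sub_one_eq_of_sum_eq_zero [AddCommGroup M] (f : ZMod n → M)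
    (hf : ∑ x, f x = 0) : ∃ F : ZMod n → M, ∀ x, F x - F (x - 1) = f x := by
  refine ⟨fun x => ∑ i ∈ range (x.val + 1), f i, fun x => ?_⟩
  obtain ⟨k, hk, rfl⟩ : ∃ k < n, x = ((k + 1 : ℕ) : ZMod n) :=
    ⟨(x - 1).val, val_lt _, by simp⟩
  simp only [Nat.cast_succ, add_sub_cancel_right, val_cast_of_lt hk]
  rcases (Nat.succ_le_of_lt hk).lt_or_eq with hk' | rfl
  · rw [← Nat.cast_succ, val_cast_of_lt hk', sum_range_succ (n := k + 1)]
    simp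
  · rw [← Nat.cast_succ, natCast_self, sum_range_natCast, hf]
    simp

end ZMod

theorem LinearMap.ker_eq_span_pair_of_exact {R : Type*} [CommRing R] {α β T : R}
    (hβ : IsLeftRegular β) (hTα : Function.Exact (T * ·) (α * ·))
    (hαT : Function.Exact (α * ·) (T * ·))
    (δ : R × R →ₗ[R] R) (hδ : ∀ z, δ z = β * z.1 + α * z.2) :
    LinearMap.ker δ = Submodule.span R {(0, T), (α, -β)} := by
  have hαT_zero : α * T = 0 := by simpa using (hTα (T * 1)).2 ⟨1, rfl⟩
  apply le_antisymm
  · rintro ⟨z₁, z₂⟩ hz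
    rw [LinearMap.mem_ker, hδ] at hz
    have hTz₁ : T * z₁ = 0 :=
      hβ.mul_left_eq_zero_iff.1 (by linear_combination T * hz - z₂ * hαT_zero)
    obtain ⟨w, rfl⟩ := (hαT z₁).1 hTz₁
    obtain ⟨s, hs : T * s = β * w + z₂⟩ := (hTα (β * w + z₂)).1 (by linear_combination hz)
    refine Submodule.mem_span_pair.2 ⟨s, w, Prod.ext ?_ ?_⟩
    · simp [mul_comm]
    · simp only [Prod.snd_add, Prod.smul_snd, smul_eq_mul]
      linear_combination hs
  · rw [Submodule.span_le, Set.insert_subset_iff, Set.singleton_subset_iff]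
    refine ⟨?_, ?_⟩ <;> simp [hδ, hαT_zero, mul_comm]

namespace MonoidAlgebra

theorem isLeftRegular_single_sub_one {R G : Type*} [CommRing R] [CommMonoid G]
    {g : G} {d : ℕ} (hg : g ^ d = 1) {c : R} (hc : IsRegular (c ^ d - 1)) :
    IsLeftRegular (single g c - 1 : MonoidAlgebra R G) := by
  have hC : IsLeftRegular (algebraMap R (MonoidAlgebra R G) (c ^ d - 1)) := fun x y h =>
    hc.isSMulRegular (by simpa only [Algebra.smul_def] using h)
  obtain ⟨q, hq⟩ := sub_dvd_pow_sub_pow (single g c) 1 d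
  have hpow : single g c ^ d - 1 ^ d = algebraMap R (MonoidAlgebra R G) (c ^ d - 1) := by
    simp [single_pow, hg, coe_algebraMap, single_sub, one_def]
  rw [hpow, mul_comm] at hq
  exact (hq ▸ hC).of_mul

theorem ext_ofAdd_prod {R A B : Type*} [Semiring R]
    {z w : MonoidAlgebra R (Multiplicative (A × B))}
    (h : ∀ x v, z.coeff (ofAdd (x, v)) = w.coeff (ofAdd (x, v))) : z = w := by
  ext g
  exact h (toAdd g).1 (toAdd g).2

variable {R : Type*} [CommRing R] {n : ℕ} {H : Type*} [AddCommGroup H]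

variable (R n H) in
noncomputable def cyclicNorm [NeZero n] : MonoidAlgebra R (Multiplicative (ZMod n × H)) :=
  ∑ x : ZMod n, single (ofAdd (x, 0)) 1

theorem sum_range_single_pow_eq_cyclicNorm [NeZero n] :
    ∑ i ∈ range n, single (ofAdd ((1 : ZMod n), (0 : H)) ^ i) (1 : R) = cyclicNorm R n H := by
  simp only [← ofAdd_nsmul, Prod.smul_mk, nsmul_one, smul_zero]
  exact ZMod.sum_range_natCast fun x => single (ofAdd (x, (0 : H))) (1 : R)

theorem coeff_single_sub_one_mul (z : MonoidAlgebra R (Multiplicative (ZMod n × H)))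
    (x : ZMod n) (v : H) :
    ((single (ofAdd ((1 : ZMod n), (0 : H))) 1 - 1) * z).coeff (ofAdd (x, v)) =
      z.coeff (ofAdd (x - 1, v)) - z.coeff (ofAdd (x, v)) := by
  rw [sub_mul, one_mul, coeff_sub, Finsupp.sub_apply, coeff_single_mul_apply, one_mul,
    ← ofAdd_neg, ← ofAdd_add]
  simp [sub_eq_neg_add]

theorem coeff_cyclicNorm_mul [NeZero n] (z : MonoidAlgebra R (Multiplicative (ZMod n × H)))
    (u : ZMod n) (v : H) :
    (cyclicNorm R n H * z).coeff (ofAdd (u, v)) = ∑ x, z.coeff (ofAdd (x, v)) := by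
  simp only [cyclicNorm, sum_mul, coeff_sum, Finset.sum_apply', coeff_single_mul_apply, one_mul,
    ← ofAdd_neg, ← ofAdd_add, Prod.neg_mk, Prod.mk_add_mk, neg_zero, zero_add]
  exact Fintype.sum_equiv (Equiv.subLeft u) _ _ fun x => by simp [sub_eq_neg_add]

theorem exact_cyclicNorm_mul_single_sub_one_mul [NeZero n] :
    Function.Exact (cyclicNorm R n H * ·)
      ((single (ofAdd ((1 : ZMod n), (0 : H))) 1 - 1) * ·) := by
  intro y
  constructor
  · intro hy
    have hperiodic (v : H) : Function.Periodic (fun x => y.coeff (ofAdd (x, v))) 1 := fun x => by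
      have := congr_arg (fun z => z.coeff (ofAdd (x + 1, v))) hy
      exact (sub_eq_zero.1 (by simpa [coeff_single_sub_one_mul] using this)).symm
    refine ⟨ofCoeff (y.coeff.filter fun g => (toAdd g).1 = 0), ext_ofAdd_prod fun u v => ?_⟩
    simp [coeff_cyclicNorm_mul, Finsupp.filter_apply,
      ZMod.apply_eq_apply_zero_of_periodic (hperiodic v) u]
  · rintro ⟨s, rfl⟩
    exact ext_ofAdd_prod fun x v => by simp [coeff_single_sub_one_mul, coeff_cyclicNorm_mul]

theorem exact_single_sub_one_mul_cyclicNorm_mul [NeZero n] [Finite H] :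
    Function.Exact ((single (ofAdd ((1 : ZMod n), (0 : H))) 1 - 1) * ·)
      (cyclicNorm R n H * ·) := by
  intro y
  constructor
  · intro hy
    have hsum : ∑ x, (fun v => y.coeff (ofAdd (x, v))) = 0 := funext fun v => by
      simpa [coeff_cyclicNorm_mul] using congr_arg (fun z => z.coeff (ofAdd (0, v))) hy
    obtain ⟨F, hF⟩ := ZMod.exists_sub_sub_one_eq_of_sum_eq_zero _ hsum
    refine ⟨ofCoeff (Finsupp.equivFunOnFinite.symm fun g => -F (toAdd g).1 (toAdd g).2),
      ext_ofAdd_prod fun x v => ?_⟩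
    simpa [coeff_single_sub_one_mul, neg_add_eq_sub] using congr_fun (hF x) v
  · rintro ⟨w, rfl⟩
    refine ext_ofAdd_prod fun u v => ?_
    rw [coeff_cyclicNorm_mul, coeff_zero, Finsupp.coe_zero, Pi.zero_apply]
    simp only [coeff_single_sub_one_mul, sum_sub_distrib, sub_eq_zero]
    exact (Equiv.subRight 1).sum_comp fun x => w.coeff (ofAdd (x, v))

end MonoidAlgebra

/-- Over `G = ℤ/pℤ × ℤ/dℤ` with generators `a, b` and `c ∈ ℤ_pˣ` with `c^d ≠ 1`, the
kernel of `δ(z₁, z₂) = (c·b - 1)z₁ + (a - 1)z₂` is generated as a `ℤ_p[G]`-module by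
`(0, 𝒯_a)` and `(a - 1, -(c·b - 1))`, where `𝒯_a = ∑_{i<p} a^i`. -/
theorem stmt_17 (p : ℕ) [Fact p.Prime] (d : ℕ) (hd : 1 ≤ d)
    (c : ℤ_[p]ˣ) (hc : (c : ℤ_[p]) ^ d ≠ 1)
    (δ : (MonoidAlgebra ℤ_[p] (Multiplicative (ZMod p × ZMod d)) ×
          MonoidAlgebra ℤ_[p] (Multiplicative (ZMod p × ZMod d)))
        →ₗ[MonoidAlgebra ℤ_[p] (Multiplicative (ZMod p × ZMod d))]
          MonoidAlgebra ℤ_[p] (Multiplicative (ZMod p × ZMod d)))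
    (hδ : ∀ z, δ z =
      (MonoidAlgebra.single (Multiplicative.ofAdd ((0 : ZMod p), (1 : ZMod d)))
          ((c : ℤ_[p])) - 1) * z.1
      + (MonoidAlgebra.single (Multiplicative.ofAdd ((1 : ZMod p), (0 : ZMod d)))
          (1 : ℤ_[p]) - 1) * z.2) :
    LinearMap.ker δ = Submodule.span
      (MonoidAlgebra ℤ_[p] (Multiplicative (ZMod p × ZMod d)))
      {(0, ∑ i ∈ Finset.range p,
          MonoidAlgebra.single
            ((Multiplicative.ofAdd ((1 : ZMod p), (0 : ZMod d))) ^ i) (1 : ℤ_[p])),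
       (MonoidAlgebra.single (Multiplicative.ofAdd ((1 : ZMod p), (0 : ZMod d)))
          (1 : ℤ_[p]) - 1,
        -(MonoidAlgebra.single (Multiplicative.ofAdd ((0 : ZMod p), (1 : ZMod d)))
            ((c : ℤ_[p])) - 1))} := by
  have : NeZero d := ⟨by omega⟩
  have hb : ofAdd ((0 : ZMod p), (1 : ZMod d)) ^ d = 1 := by
    rw [← ofAdd_nsmul, Prod.smul_mk, smul_zero, nsmul_one, ZMod.natCast_self, Prod.mk_zero_zero,
      ofAdd_zero]
  rw [sum_range_single_pow_eq_cyclicNorm]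
  exact LinearMap.ker_eq_span_pair_of_exact
    (isLeftRegular_single_sub_one hb (.of_ne_zero (sub_ne_zero.2 hc)))
    exact_cyclicNorm_mul_single_sub_one_mul exact_single_sub_one_mul_cyclicNorm_mul δ hδ
end

section
/- Let p be an odd prime and let 𝓕 be the Lubin–Tate formal group law over ℤ_p associated to π = up with u ∈ ℤ_p^×, whose logarithm is log_𝓕(X) = ∑_{j=0}^∞ X^{p^j}/π^j. Let N be a finite extension of ℚ_p with normalized valuation v_N satisfying v_N(p) = p (i.e., absolute ramification index p). Then for every x ∈ N with v_N(x) = 1, the series log_𝓕(x) converges and v_N(log_𝓕(x)) = 0. -/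
/-!
Write the valuation multiplicatively, so `v x = exp (-1)` and `v π = exp (-p)`. The `j`-th term
`x ^ p ^ j / π ^ j` has valuation `exp (j * p - p ^ j)`: the term `j = 0` has valuation `v x < 1`,
the term `j = 1` is a unit, and for `j ≥ 2` the valuation is at most `v x ^ j` because
`j * (p + 1) ≤ p ^ j` once `p ≥ 3`. Hence the terms tend to zero, the series converges in the
complete nonarchimedean field, and by the ultrametric inequality its sum has the valuation of the
unit term `x ^ p / π`.
-/

open Filter Topology WithZero

theorem Nat.mul_add_one_le_pow {p j : ℕ} (hp : 3 ≤ p) (hj : 2 ≤ j) : j * (p + 1) ≤ p ^ j := by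
  induction j, hj using Nat.le_induction with
  | base => nlinarith
  | succ j hj ih =>
    have hpj : p * p ≤ p ^ j := by simpa [sq] using Nat.pow_le_pow_right (by omega) hj
    rw [pow_succ]
    nlinarith [Nat.mul_le_mul_left (p ^ j) hp]

namespace Valued

variable {R Γ₀ : Type*} [Ring R] [LinearOrderedCommGroupWithZero Γ₀] [Valued R Γ₀]

instance toNonarchimedeanAddGroup : NonarchimedeanAddGroup R where
  is_nonarchimedean U hU := by
    obtain ⟨γ, hγ⟩ := mem_nhds_zero.mp hU
    exact ⟨⟨v.restrict.ltAddSubgroup γ, isOpen_ball R γ.1⟩, hγ⟩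

theorem tendsto_zero_of_v_le {ι : Type*} {l : Filter ι} {f g : ι → R}
    (hg : Tendsto g l (𝓝 0)) (hfg : ∀ᶠ i in l, v (f i) ≤ v (g i)) : Tendsto f l (𝓝 0) := by
  rw [(hasBasis_nhds_zero R Γ₀).tendsto_right_iff] at hg ⊢
  intro γ _
  filter_upwards [hg γ trivial, hfg] with i hgi hfgi
  exact (v.restrict_le_iff.mpr hfgi).trans_lt hgi

theorem v_tsum_le {ι : Type*} {f : ι → R} (hf : Summable f) {a : R}
    (h : ∀ i, v (f i) ≤ v a) : v (∑' i, f i) ≤ v a := by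
  have hclosed : IsClosed {y : R | v y ≤ v a} := by
    simpa only [Valuation.restrict_le_iff] using isClosed_closedBall R (v.restrict a)
  exact hclosed.mem_of_tendsto hf.hasSum (.of_forall fun s => v.map_sum_le fun i _ => h i)

end Valued

open Valued

section LogSeries

variable {K : Type*} [Field K] [Valued K ℤᵐ⁰] {p : ℕ} {x π : K}

theorem v_pow_pow_div_pow_eq_exp (hx : v x = exp (-1)) (hπ : v π = exp (-(p : ℤ))) (j : ℕ) :
    v (x ^ p ^ j / π ^ j) = exp (j * p - p ^ j : ℤ) := by
  rw [map_div₀, map_pow, map_pow, hx, hπ, ← exp_nsmul, ← exp_nsmul, ← exp_sub]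
  congr 1
  simp only [nsmul_eq_mul]
  push_cast
  ring

theorem v_pow_pow_div_pow_le_v_pow (hp : 3 ≤ p) (hx : v x = exp (-1)) (hπ : v π = exp (-(p : ℤ)))
    {j : ℕ} (hj : 2 ≤ j) : v (x ^ p ^ j / π ^ j) ≤ v (x ^ j) := by
  rw [v_pow_pow_div_pow_eq_exp hx hπ, map_pow, hx, ← exp_nsmul, exp_le_exp, nsmul_eq_mul]
  have := Nat.mul_add_one_le_pow hp hj
  zify at this
  linarith

theorem exists_hasSum_pow_pow_div_pow_and_v_eq_one [CompleteSpace K] (hp : 3 ≤ p)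
    (hx : v x = exp (-1)) (hπ : v π = exp (-(p : ℤ))) :
    ∃ L : K, HasSum (fun j : ℕ => x ^ p ^ j / π ^ j) L ∧ v L = 1 := by
  set f : ℕ → K := fun j => x ^ p ^ j / π ^ j with hf
  have hsum : Summable f := by
    refine NonarchimedeanAddGroup.summable_of_tendsto_cofinite_zero ?_
    rw [Nat.cofinite_eq_atTop]
    exact tendsto_zero_of_v_le (tendsto_zero_pow_of_le_exp_neg_one hx.le)
      (eventually_atTop.2 ⟨2, fun j => v_pow_pow_div_pow_le_v_pow hp hx hπ⟩)
  have hx_lt : v x < 1 := by rw [hx, ← exp_zero, exp_lt_exp]; omega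
  have htail : v (∑' j, f (j + 2)) ≤ v x ^ 2 := by
    have hsum2 : Summable fun j => f (j + 2) := (summable_nat_add_iff 2).mpr hsum
    refine map_pow v x 2 ▸ v_tsum_le hsum2 fun j => ?_
    calc v (f (j + 2)) ≤ v (x ^ (j + 2)) := v_pow_pow_div_pow_le_v_pow hp hx hπ (by omega)
      _ ≤ v (x ^ 2) := by
        simp only [map_pow]
        exact pow_le_pow_right_of_le_one' hx_lt.le (by omega)
  have hv0 : v (f 0) = v x := by simp [hf]
  have hv1 : v (f 1) = 1 := by simpa [hf] using v_pow_pow_div_pow_eq_exp hx hπ 1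
  have hlt : v (f 0 + ∑' j, f (j + 2)) < v (f 1) :=
    hv1 ▸ v.map_add_lt (hv0 ▸ hx_lt) (htail.trans_lt (pow_lt_one₀ zero_le hx_lt two_ne_zero))
  refine ⟨_, hsum.hasSum, ?_⟩
  rw [← hsum.sum_add_tsum_nat_add 2, Finset.sum_range_succ, Finset.sum_range_one,
    add_comm (f 0), add_assoc, v.map_add_eq_of_lt_left hlt, hv1]

end LogSeries

theorem stmt_19_general (p : ℕ) [Fact p.Prime] (hp2 : p ≠ 2) (u : ℤ_[p]ˣ)
    (N : Type*) [Field N] [Valued N (WithZero (Multiplicative ℤ))] [CompleteSpace N]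
    [Algebra ℚ_[p] N]
    (hvp : Valued.v (algebraMap ℚ_[p] N (p : ℚ_[p]))
      = (Multiplicative.ofAdd (-(p : ℤ)) : Multiplicative ℤ))
    (hvu : Valued.v (algebraMap ℚ_[p] N (((u : ℤ_[p]) : ℚ_[p]))) = 1)
    (π : N) (hπ : π = algebraMap ℚ_[p] N (((u : ℤ_[p]) : ℚ_[p]) * (p : ℚ_[p])))
    (x : N) (hx : Valued.v x = (Multiplicative.ofAdd (-1 : ℤ) : Multiplicative ℤ)) :
    ∃ L : N, HasSum (fun j : ℕ => x ^ (p ^ j) / π ^ j) L ∧ Valued.v L = 1 := by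
  have hp : 3 ≤ p := (Fact.out : p.Prime).two_le.lt_of_ne' hp2
  have hvπ : v π = exp (-(p : ℤ)) := by
    rw [hπ, map_mul, map_mul, hvu, hvp, one_mul]
    rfl
  exact exists_hasSum_pow_pow_div_pow_and_v_eq_one hp hx hvπ

/-- For the Lubin–Tate logarithm `log_𝓕(X) = ∑_j X^{p^j}/π^j` with `π = u·p` (`u ∈ ℤ_pˣ`),
over a finite extension `N/ℚ_p` (with its valuation, normalized additively, satisfying
`v_N(p) = p`, i.e. absolute ramification index `p`): for any `x ∈ N` with `v_N(x) = 1`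
the series `∑_j x^{p^j}/π^j` converges and its sum has valuation `0`. -/
theorem stmt_19 (p : ℕ) [Fact p.Prime] (hp2 : p ≠ 2) (u : ℤ_[p]ˣ)
    (N : Type*) [Field N] [Valued N (WithZero (Multiplicative ℤ))] [CompleteSpace N]
    [Algebra ℚ_[p] N] [FiniteDimensional ℚ_[p] N]
    (hvp : Valued.v (algebraMap ℚ_[p] N (p : ℚ_[p]))
      = (Multiplicative.ofAdd (-(p : ℤ)) : Multiplicative ℤ))
    (hvu : Valued.v (algebraMap ℚ_[p] N (((u : ℤ_[p]) : ℚ_[p]))) = 1)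
    (π : N) (hπ : π = algebraMap ℚ_[p] N (((u : ℤ_[p]) : ℚ_[p]) * (p : ℚ_[p])))
    (x : N) (hx : Valued.v x = (Multiplicative.ofAdd (-1 : ℤ) : Multiplicative ℤ)) :
    ∃ L : N, HasSum (fun j : ℕ => x ^ (p ^ j) / π ^ j) L ∧ Valued.v L = 1 :=
  stmt_19_general p hp2 u N hvp hvu π hπ x hx
end
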